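/- arXiv:1408.1129 — 5 statements merged into one kernel-verified Lean document; each statement's English description precedes it below -/
import Mathlib

section
/- Let U = ℂ \ [0,∞) with hyperbolic density ρ_U(w) = 1/(2|w| sin(θ(w)/2)), where θ(w) ∈ (0,2π) is the argument of w. Then for every ζ ∈ U with exp(ζ) ∈ U, the hyperbolic derivative of exp satisfies |exp(ζ)| · ρ_U(exp(ζ))/ρ_U(ζ) ≥ 1/|cos(θ(ζ)/2)| > 1. -/
open Real

/-- The argument of `w` chosen in `(0, 2π)` (for `w` off the nonnegative real axis). -/
noncomputable def argPos (w : ℂ) : ℝ :=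
  if 0 < Complex.arg w then Complex.arg w else Complex.arg w + 2 * π

/-- Density of the hyperbolic metric of `ℂ \ [0,∞)`. -/
noncomputable def rhoU (w : ℂ) : ℝ := 1 / (2 * ‖w‖ * Real.sin (argPos w / 2))

/-!
Write `θ = argPos ζ` and `φ = argPos (exp ζ)`. The hyperbolic derivative equals
`‖ζ‖ sin (θ/2) / sin (φ/2)`. Since `φ ≡ Im ζ (mod 2π)` and `sin (φ/2) ≥ 0`,
`sin (φ/2) = |sin (Im ζ / 2)| ≤ |Im ζ| / 2 = ‖ζ‖ |sin θ| / 2 = ‖ζ‖ sin (θ/2) |cos (θ/2)|`,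
which is the estimate. As `θ/2 ∈ (0, π)`, `|cos (θ/2)| < 1`.
-/

lemma abs_cos_lt_one_of_sin_ne_zero {x : ℝ} (hx : sin x ≠ 0) : |cos x| < 1 := by
  have hsin : 0 < sin x ^ 2 := by positivity
  have hcos : cos x ^ 2 < 1 := by nlinarith [sin_sq_add_cos_sq x]
  exact (sq_lt_one_iff_abs_lt_one _).mp hcos

namespace argPos

lemma pos (w : ℂ) : 0 < argPos w := by
  unfold argPos
  split_ifs with h
  · exact h
  · linarith [Complex.neg_pi_lt_arg w, pi_pos]

lemma le_two_pi (w : ℂ) : argPos w ≤ 2 * π := by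
  unfold argPos
  split_ifs with h
  · linarith [Complex.arg_le_pi w, pi_pos]
  · linarith [not_lt.mp h]

lemma lt_two_pi {w : ℂ} (hw : Complex.arg w ≠ 0) : argPos w < 2 * π := by
  unfold argPos
  split_ifs with h
  · linarith [Complex.arg_le_pi w, pi_pos]
  · linarith [lt_of_le_of_ne (not_lt.mp h) hw]

lemma cos_eq (w : ℂ) : cos (argPos w) = cos (Complex.arg w) := by
  unfold argPos
  split_ifs
  · rfl
  · exact cos_add_two_pi _

lemma sin_eq (w : ℂ) : sin (argPos w) = sin (Complex.arg w) := by
  unfold argPos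
  split_ifs
  · rfl
  · exact sin_add_two_pi _

lemma sin_half_nonneg (w : ℂ) : 0 ≤ sin (argPos w / 2) :=
  sin_nonneg_of_nonneg_of_le_pi (by linarith [pos w]) (by linarith [le_two_pi w])

lemma sin_half_pos {w : ℂ} (hw : w.im ≠ 0 ∨ w.re < 0) : 0 < sin (argPos w / 2) := by
  have harg : Complex.arg w ≠ 0 := by
    rw [Ne, Complex.arg_eq_zero_iff]
    rintro ⟨hre, him⟩
    rcases hw with h | h
    · exact h him
    · linarith
  exact sin_pos_of_pos_of_lt_pi (by linarith [pos w]) (by linarith [lt_two_pi harg])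

lemma sin_half_exp (z : ℂ) : sin (argPos (Complex.exp z) / 2) = |sin (z.im / 2)| := by
  have hcos : cos (argPos (Complex.exp z)) = cos z.im := by
    rw [cos_eq, Complex.cos_arg (Complex.exp_ne_zero z), Complex.exp_re, Complex.norm_exp]
    field_simp
  have hsq : sin (argPos (Complex.exp z) / 2) ^ 2 = sin (z.im / 2) ^ 2 := by
    rw [sin_sq_eq_half_sub, sin_sq_eq_half_sub, mul_div_cancel₀ _ two_ne_zero,
      mul_div_cancel₀ _ two_ne_zero, hcos]
  rw [← sqrt_sq (sin_half_nonneg _), hsq, sqrt_sq_eq_abs]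

lemma abs_im_eq (z : ℂ) : |z.im| = 2 * ‖z‖ * sin (argPos z / 2) * |cos (argPos z / 2)| := by
  have hdouble : sin (argPos z) = 2 * sin (argPos z / 2) * cos (argPos z / 2) := by
    rw [← sin_two_mul, mul_div_cancel₀ _ two_ne_zero]
  rw [← Complex.norm_mul_sin_arg, ← sin_eq, hdouble, abs_mul, abs_mul, abs_mul, abs_norm,
    abs_two, abs_of_nonneg (sin_half_nonneg z)]
  ring

end argPos

lemma sin_half_argPos_exp_le (z : ℂ) :
    sin (argPos (Complex.exp z) / 2) ≤ ‖z‖ * sin (argPos z / 2) * |cos (argPos z / 2)| :=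
  calc sin (argPos (Complex.exp z) / 2) = |sin (z.im / 2)| := argPos.sin_half_exp z
    _ ≤ |z.im / 2| := abs_sin_le_abs
    _ = ‖z‖ * sin (argPos z / 2) * |cos (argPos z / 2)| := by
      rw [abs_div, abs_two, argPos.abs_im_eq]
      ring

lemma norm_exp_mul_rhoU_exp_div_rhoU (z : ℂ) :
    ‖Complex.exp z‖ * (rhoU (Complex.exp z) / rhoU z) =
      ‖z‖ * sin (argPos z / 2) / sin (argPos (Complex.exp z) / 2) := by
  have hnorm : ‖Complex.exp z‖ ≠ 0 := (norm_pos_iff.mpr (Complex.exp_ne_zero z)).ne'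
  simp only [rhoU, one_div, inv_div_inv, mul_assoc, mul_div_mul_left _ _ (two_ne_zero' ℝ),
    ← mul_div_assoc, mul_div_mul_left _ _ hnorm]

theorem exp_expands_slit_plane_metric_general (ζ : ℂ)
    (hexp : (Complex.exp ζ).im ≠ 0 ∨ (Complex.exp ζ).re < 0) :
    1 / |Real.cos (argPos ζ / 2)| ≤
        ‖Complex.exp ζ‖ * (rhoU (Complex.exp ζ) / rhoU ζ) ∧
      1 < 1 / |Real.cos (argPos ζ / 2)| := by
  have hφ := argPos.sin_half_pos hexp
  have hkey := sin_half_argPos_exp_le ζ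
  have hprod := hφ.trans_le hkey
  have hcos : 0 < |cos (argPos ζ / 2)| :=
    pos_of_mul_pos_right hprod (mul_nonneg (norm_nonneg ζ) (argPos.sin_half_nonneg ζ))
  have hθ : 0 < sin (argPos ζ / 2) :=
    pos_of_mul_pos_right (pos_of_mul_pos_left hprod hcos.le) (norm_nonneg ζ)
  refine ⟨?_, one_lt_one_div hcos (abs_cos_lt_one_of_sin_ne_zero hθ.ne')⟩
  rw [norm_exp_mul_rhoU_exp_div_rhoU, div_le_div_iff₀ hcos hφ]
  linarith

theorem exp_expands_slit_plane_metric (ζ : ℂ)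
    (hζ : ζ.im ≠ 0 ∨ ζ.re < 0) (hexp : (Complex.exp ζ).im ≠ 0 ∨ (Complex.exp ζ).re < 0) :
    1 / |Real.cos (argPos ζ / 2)| ≤
        ‖Complex.exp ζ‖ * (rhoU (Complex.exp ζ) / rhoU ζ) ∧
      1 < 1 / |Real.cos (argPos ζ / 2)| :=
  exp_expands_slit_plane_metric_general ζ hexp
end

section
/- Let a ≥ 2π and S be a closed square of side length 2π with left edge at real part a. Then exp(S) is the closed annulus {w : e^a ≤ |w| ≤ e^{a+2π}}, and this annulus contains a closed axis-parallel rectangle R of height 2π, symmetric about the imaginary axis, tangent to the circle |w| = e^a from outside, whose horizontal half-length ℓ satisfies ℓ² = e^{2(a+2π)} - (e^a + 2π)² > e^{2a}. -/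
/-
Each vertical segment of length 2π is wrapped by `exp` once around a circle, so the square covers
exactly the annulus between the images of its vertical sides. The rectangle lies in the annulus
because its far corners have modulus √(ℓ² + (eᵃ + 2π)²) = e^{a+2π}. Finally ℓ² > e^{2a} because
(eᵃ + 2π)² ≤ 4e^{2a} once eᵃ ≥ 2π, while e^{2(a+2π)} = e^{4π}e^{2a} and e^{4π} > 5.
-/

open Real

namespace Complex

open Set

theorem exists_exp_eq_of_ne_zero_im_mem_Ico {w : ℂ} (hw : w ≠ 0) (y₀ : ℝ) :
    ∃ z : ℂ, exp z = w ∧ z.re = Real.log ‖w‖ ∧ z.im ∈ Ico y₀ (y₀ + 2 * π) := by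
  set n := toIcoDiv two_pi_pos y₀ w.arg
  refine ⟨log w - n * (2 * π * I), ?_, by simp [log_re], ?_⟩
  · rw [exp_sub, exp_log hw, exp_int_mul_two_pi_mul_I, div_one]
  · convert toIcoMod_mem_Ico two_pi_pos y₀ w.arg using 1
    rw [← self_sub_toIcoDiv_zsmul]
    simp [n, log_im]

theorem exp_image_reProdIm_Icc (a b y₀ : ℝ) :
    exp '' (Icc a b ×ℂ Icc y₀ (y₀ + 2 * π)) = {w : ℂ | Real.exp a ≤ ‖w‖ ∧ ‖w‖ ≤ Real.exp b} := by
  ext w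
  constructor
  · rintro ⟨z, hz, rfl⟩
    rw [mem_reProdIm] at hz
    simp only [mem_ofPred_eq, norm_exp, Real.exp_le_exp]
    exact hz.1
  · rintro ⟨hlow, hup⟩
    have hw : w ≠ 0 := norm_pos_iff.mp ((Real.exp_pos a).trans_le hlow)
    obtain ⟨z, rfl, hre, him⟩ := exists_exp_eq_of_ne_zero_im_mem_Ico hw y₀
    refine ⟨z, mem_reProdIm.mpr ⟨⟨?_, ?_⟩, Ico_subset_Icc_self him⟩, rfl⟩
    · rwa [hre, Real.le_log_iff_exp_le (norm_pos_iff.mpr hw)]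
    · rwa [hre, Real.log_le_iff_le_exp (norm_pos_iff.mpr hw)]

theorem rectangle_subset_annulus {r t R ℓ : ℝ} (hr : 0 ≤ r) (hR : 0 ≤ R)
    (hcorner : ℓ ^ 2 + t ^ 2 ≤ R ^ 2) :
    {w : ℂ | |w.re| ≤ ℓ ∧ r ≤ w.im ∧ w.im ≤ t} ⊆ {w : ℂ | r ≤ ‖w‖ ∧ ‖w‖ ≤ R} := by
  rintro w ⟨hre, hbot, htop⟩
  refine ⟨hbot.trans ((le_abs_self _).trans (abs_im_le_norm w)), ?_⟩
  have hsq : ‖w‖ ^ 2 = w.re ^ 2 + w.im ^ 2 := by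
    rw [Complex.sq_norm, normSq_apply]; ring
  have hre2 : w.re ^ 2 ≤ ℓ ^ 2 := sq_le_sq' (neg_le_of_abs_le hre) (le_of_abs_le hre)
  have him2 : w.im ^ 2 ≤ t ^ 2 := pow_le_pow_left₀ (hr.trans hbot) htop 2
  exact pow_le_pow_iff_left₀ (norm_nonneg w) hR two_ne_zero |>.mp (by linarith)

end Complex

theorem two_pi_le_exp {a : ℝ} (ha : 2 * π ≤ a) : 2 * π ≤ Real.exp a :=
  calc 2 * π ≤ 2 * π + 1 := by linarith
    _ ≤ Real.exp (2 * π) := add_one_le_exp _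
    _ ≤ Real.exp a := exp_le_exp.mpr ha

theorem exp_two_mul_add_sq_lt {a : ℝ} (ha : 2 * π ≤ Real.exp a) :
    Real.exp (2 * a) + (Real.exp a + 2 * π) ^ 2 < Real.exp (2 * (a + 2 * π)) := by
  have hsplit : Real.exp (2 * (a + 2 * π)) = Real.exp (2 * a) * Real.exp (4 * π) := by
    rw [← Real.exp_add]; ring_nf
  have hsq : (Real.exp a + 2 * π) ^ 2 ≤ 4 * Real.exp (2 * a) := by
    calc (Real.exp a + 2 * π) ^ 2 ≤ (2 * Real.exp a) ^ 2 :=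
          pow_le_pow_left₀ (by positivity) (by linarith) 2
      _ = 4 * Real.exp (2 * a) := by rw [two_mul a, Real.exp_add]; ring
  have hfive : 5 < Real.exp (4 * π) :=
    calc (5 : ℝ) < 5 + 1 := by norm_num
      _ ≤ Real.exp 5 := add_one_le_exp _
      _ ≤ Real.exp (4 * π) := exp_le_exp.mpr (by linarith [pi_gt_three])
  nlinarith [Real.exp_pos (2 * a)]

theorem exp_image_of_square (a y₀ : ℝ) (ha : 2 * π ≤ a)
    (S : Set ℂ) (hS : S = {w : ℂ | a ≤ w.re ∧ w.re ≤ a + 2 * π ∧ y₀ ≤ w.im ∧ w.im ≤ y₀ + 2 * π})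
    (ℓ : ℝ) (hℓ : ℓ = Real.sqrt (Real.exp (2 * (a + 2 * π)) - (Real.exp a + 2 * π) ^ 2)) :
    Complex.exp '' S =
        {w : ℂ | Real.exp a ≤ ‖w‖ ∧ ‖w‖ ≤ Real.exp (a + 2 * π)} ∧
      ℓ ^ 2 = Real.exp (2 * (a + 2 * π)) - (Real.exp a + 2 * π) ^ 2 ∧
      ℓ ^ 2 > Real.exp (2 * a) ∧
      {w : ℂ | |w.re| ≤ ℓ ∧ Real.exp a ≤ w.im ∧ w.im ≤ Real.exp a + 2 * π} ⊆
        {w : ℂ | Real.exp a ≤ ‖w‖ ∧ ‖w‖ ≤ Real.exp (a + 2 * π)} := by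
  have hgap := exp_two_mul_add_sq_lt (two_pi_le_exp ha)
  have hℓsq : ℓ ^ 2 = Real.exp (2 * (a + 2 * π)) - (Real.exp a + 2 * π) ^ 2 := by
    rw [hℓ, sq_sqrt]
    linarith [Real.exp_pos (2 * a)]
  have hsquare : S = Set.Icc a (a + 2 * π) ×ℂ Set.Icc y₀ (y₀ + 2 * π) := by
    ext w
    simp [hS, Complex.mem_reProdIm, and_assoc]
  refine ⟨hsquare ▸ Complex.exp_image_reProdIm_Icc _ _ _, hℓsq, by linarith, ?_⟩
  refine Complex.rectangle_subset_annulus (Real.exp_pos a).le (Real.exp_pos _).le ?_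
  rw [hℓsq, sq (Real.exp (a + 2 * π)), ← Real.exp_add, ← two_mul]
  linarith
end

section
/- Let K be a nonempty compact subset of ℂ \ {0} and set ρ = 3π + max_{z ∈ K} |log|z||. If D is an open disc of radius 2π centred at a point ζ with Re ζ ≥ ρ, then K ⊆ exp(exp(D)). -/
/-!
Fix `z ∈ K` and write `M` for the supremum, `E = exp (Re ζ - π)`. Choosing the branch of `log z`
whose imaginary part lies in `[E, E + 2π)` gives `v` with `exp v = z`, `|Re v| ≤ M` and
`E ≤ ‖v‖ ≤ M + E + 2π ≤ exp (Re ζ + π)`, so `log ‖v‖` is within `π` of `Re ζ`. Choosing the branch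
of `log v` whose imaginary part lies within `π` of `Im ζ` then gives `w` with `exp (exp w) = z`
in the square of side `2π` around `ζ`, which lies in `D_{2π}(ζ)`.
-/

open Real Metric

namespace Complex

theorem exists_exp_eq_re_eq_im_mem_Ico {z : ℂ} (hz : z ≠ 0) (a : ℝ) :
    ∃ v, exp v = z ∧ v.re = Real.log ‖z‖ ∧ v.im ∈ Set.Ico a (a + 2 * π) := by
  set n := toIcoDiv two_pi_pos a z.arg
  refine ⟨log z - n * (2 * π * I), ?_, by simp [log_re], ?_⟩
  · rw [exp_sub, exp_log hz, exp_int_mul_two_pi_mul_I, div_one]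
  · convert toIcoMod_mem_Ico two_pi_pos a z.arg using 1
    rw [← self_sub_toIcoDiv_zsmul]
    simp [log_im, n]

theorem mem_ball_of_abs_re_sub_le_of_abs_im_sub_le {w ζ : ℂ} {r : ℝ} (hr : 0 < r)
    (hre : |w.re - ζ.re| ≤ r) (him : |w.im - ζ.im| ≤ r) : w ∈ ball ζ (2 * r) := by
  rw [mem_ball, dist_eq]
  calc ‖w - ζ‖ ≤ √2 * max |(w - ζ).re| |(w - ζ).im| := norm_le_sqrt_two_mul_max _
    _ ≤ √2 * r := by gcongr; simpa only [sub_re, sub_im] using max_le hre him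
    _ < 2 * r := by gcongr; rw [Real.sqrt_lt' two_pos]; norm_num

theorem abs_log_norm_sub_le_pi {v : ℂ} {M R : ℝ} (hR : 3 * π + M ≤ R) (hre : |v.re| ≤ M)
    (him : v.im ∈ Set.Ico (rexp (R - π)) (rexp (R - π) + 2 * π)) :
    |Real.log ‖v‖ - R| ≤ π := by
  set E := rexp (R - π)
  have hlower : E ≤ ‖v‖ := him.1.trans ((le_abs_self _).trans (abs_im_le_norm v))
  have hv : 0 < ‖v‖ := (exp_pos _).trans_le hlower
  have hE : M + 2 * π + 1 ≤ E := (add_one_le_exp _).trans (exp_le_exp.2 (by linarith))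
  have hupper : ‖v‖ ≤ rexp (R + π) :=
    calc ‖v‖ ≤ |v.re| + |v.im| := norm_le_abs_re_add_abs_im v
      _ ≤ M + (E + 2 * π) := by
        gcongr
        rw [abs_of_nonneg (by linarith [him.1, exp_pos (R - π)])]
        exact him.2.le
      _ ≤ E * (2 * π + 1) := by nlinarith [pi_gt_three, (abs_nonneg v.re).trans hre]
      _ ≤ E * rexp (2 * π) := by gcongr; exact add_one_le_exp _
      _ = rexp (R + π) := by rw [← Real.exp_add]; ring_nf
  rw [abs_sub_le_iff]
  constructor
  · linarith [(Real.log_le_iff_le_exp hv).2 hupper]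
  · linarith [(Real.le_log_iff_exp_le hv).2 hlower]

end Complex

theorem large_discs_blow_up_general (K : Set ℂ) (hK : IsCompact K)
    (h0 : (0 : ℂ) ∉ K) (ζ : ℂ)
    (hζ : 3 * π + sSup ((fun z => |Real.log ‖z‖|) '' K) ≤ ζ.re) :
    K ⊆ Complex.exp '' (Complex.exp '' ball ζ (2 * π)) := by
  intro z hz
  have hcont : ContinuousOn (fun z : ℂ => |Real.log ‖z‖|) K :=
    (continuous_norm.continuousOn.log fun x hx =>
      norm_ne_zero_iff.2 (ne_of_mem_of_not_mem hx h0)).abs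
  have hM : |Real.log ‖z‖| ≤ sSup ((fun z => |Real.log ‖z‖|) '' K) :=
    le_csSup (hK.bddAbove_image hcont) (Set.mem_image_of_mem _ hz)
  obtain ⟨v, hv, hv_re, hv_im⟩ :=
    Complex.exists_exp_eq_re_eq_im_mem_Ico (ne_of_mem_of_not_mem hz h0) (rexp (ζ.re - π))
  have hv0 : v ≠ 0 := by
    rintro rfl
    exact (exp_pos _).not_ge hv_im.1
  obtain ⟨w, hw, hw_re, hw_im⟩ := Complex.exists_exp_eq_re_eq_im_mem_Ico hv0 (ζ.im - π)
  have hw_re' : |w.re - ζ.re| ≤ π := hw_re ▸ Complex.abs_log_norm_sub_le_pi hζ (hv_re ▸ hM) hv_im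
  have hw_im' : |w.im - ζ.im| ≤ π :=
    abs_sub_le_iff.2 ⟨by linarith [hw_im.2], by linarith [hw_im.1]⟩
  exact ⟨Complex.exp w,
    ⟨w, Complex.mem_ball_of_abs_re_sub_le_of_abs_im_sub_le pi_pos hw_re' hw_im', rfl⟩,
    by rw [hw, hv]⟩

theorem large_discs_blow_up (K : Set ℂ) (hK : IsCompact K) (hKne : K.Nonempty)
    (h0 : (0 : ℂ) ∉ K) (ζ : ℂ)
    (hζ : 3 * π + sSup ((fun z => |Real.log ‖z‖|) '' K) ≤ ζ.re) :
    K ⊆ Complex.exp '' (Complex.exp '' ball ζ (2 * π)) :=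
  large_discs_blow_up_general K hK h0 ζ hζ
end

section
/- Every periodic point of the complex exponential map is repelling: if exp^n(p) = p for some n ≥ 1, then |(exp^n)'(p)| > 1. -/
/-!
Since `Im (exp z) = exp (Re z) · sin (Im z)` and `|sin t| < |t|` for `t ≠ 0`,
`|Im (exp z)| < |exp z| · |Im z|` off the real axis. A periodic orbit never meets `ℝ`, where
`exp` is strictly increasing and above the identity, so multiplying these inequalities around the
orbit, the factors `|Im|` cancel and `1 < ∏ |exp (exp^[k] p)| = |(exp^[n])' p|`.
-/

open Finset Function

theorem Finset.prod_range_succ_eq_prod_range {M : Type*} [CommMonoid M] {f : ℕ → M} {n : ℕ}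
    (h : f n = f 0) : ∏ k ∈ range n, f (k + 1) = ∏ k ∈ range n, f k := by
  cases n with
  | zero => simp
  | succ m => rw [prod_range_succ, prod_range_succ' f, h]

theorem one_lt_prod_of_cyclic_lt_mul {R : Type*} [CommSemiring R] [LinearOrder R]
    [IsStrictOrderedRing R] {y c : ℕ → R} {n : ℕ} (hn : 0 < n) (hy : ∀ k, 0 < y k)
    (hcycle : y n = y 0) (hstep : ∀ k, y (k + 1) < c k * y k) :
    1 < ∏ k ∈ range n, c k := by
  have hprod : ∏ k ∈ range n, y k < (∏ k ∈ range n, c k) * ∏ k ∈ range n, y k :=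
    calc ∏ k ∈ range n, y k = ∏ k ∈ range n, y (k + 1) :=
          (prod_range_succ_eq_prod_range hcycle).symm
      _ < ∏ k ∈ range n, (c k * y k) :=
          prod_lt_prod_of_nonempty (fun k _ ↦ hy _) (fun k _ ↦ hstep k)
            (nonempty_range_iff.2 hn.ne')
      _ = (∏ k ∈ range n, c k) * ∏ k ∈ range n, y k := prod_mul_distrib
  exact (lt_mul_iff_one_lt_left (prod_pos fun k _ ↦ hy k)).1 hprod

theorem StrictMono.lt_iterate_of_lt_map {α : Type*} [Preorder α] {f : α → α}
    (hf : StrictMono f) {x : α} (hx : x < f x) {n : ℕ} (hn : 0 < n) : x < f^[n] x := by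
  simpa using Commute.id_left.iterate_pos_lt_of_map_lt monotone_id hf hx hn

theorem Complex.exp_iterate_ofReal (x : ℝ) (n : ℕ) :
    Complex.exp^[n] (x : ℂ) = (Real.exp^[n] x : ℝ) :=
  ((Semiconj.iterate_right (fun t ↦ Complex.ofReal_exp t) n) x).symm

theorem Complex.im_ne_zero_of_isPeriodicPt_exp {z : ℂ} {n : ℕ} (hn : 0 < n)
    (hz : IsPeriodicPt Complex.exp n z) : z.im ≠ 0 := by
  intro him
  have hreal : z = (z.re : ℂ) := Complex.ext rfl (by simp [him])
  have hfix : Real.exp^[n] z.re = z.re := by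
    have := hz.eq
    rw [hreal, Complex.exp_iterate_ofReal] at this
    exact_mod_cast this
  exact (Real.exp_strictMono.lt_iterate_of_lt_map
    ((Real.add_one_le_exp z.re).trans_lt' (lt_add_one _)) hn).ne' hfix

theorem Complex.abs_im_exp_lt {z : ℂ} (hz : z.im ≠ 0) :
    |(Complex.exp z).im| < ‖Complex.exp z‖ * |z.im| := by
  rw [Complex.exp_im, Complex.norm_exp, abs_mul, abs_of_pos (Real.exp_pos _)]
  exact mul_lt_mul_of_pos_left (Real.abs_sin_lt_abs hz) (Real.exp_pos _)

theorem periodic_points_repelling (p : ℂ) (n : ℕ) (hn : 1 ≤ n)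
    (hp : Complex.exp^[n] p = p) :
    1 < ‖∏ k ∈ Finset.range n, Complex.exp (Complex.exp^[k] p)‖ := by
  have hper : IsPeriodicPt Complex.exp n p := hp
  have him k : (Complex.exp^[k] p).im ≠ 0 :=
    Complex.im_ne_zero_of_isPeriodicPt_exp hn (hper.apply_iterate k)
  rw [norm_prod]
  refine one_lt_prod_of_cyclic_lt_mul hn (y := fun k ↦ |(Complex.exp^[k] p).im|)
    (fun k ↦ abs_pos.2 (him k)) (by simp only [hp, iterate_zero_apply]) fun k ↦ ?_
  simpa only [iterate_succ_apply'] using Complex.abs_im_exp_lt (him k)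
end

section
/- Let z_0 ∈ ℂ with exp^n(z_0) ≠ 0 for all n (automatic since exp never vanishes, assuming z_0 arbitrary, note exp^n(z_0) ≠ 0 for n ≥ 1), and suppose |exp^n(z_0)| ≥ 2π + 2 for all n ≥ 1. Then for each n ≥ 1 there is a holomorphic map φ_n on the disc D_n = D_{2π}(exp^n(z_0)) with φ_n(exp^n(z_0)) = z_0, exp^n(φ_n(z)) = z for all z ∈ D_n, and |φ_n'(z)| ≤ 2^{-n} for all z ∈ D_n. -/
/-!
On a disc of radius `r` around a point `w` with `‖w‖ ≥ r + 2`, the branch `c + log (z / w)` of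
the logarithm with value `c` at `w = exp c` is holomorphic with derivative `1 / z` of modulus
at most `1 / 2`. By the mean value inequality it maps the disc of radius `r` about `w` into the
disc of radius `r / 2 ≤ r` about `c`, so these branches can be composed backwards along the orbit
of `z₀`, and the chain rule multiplies the `n` factors `1 / 2`.
-/

open Real Metric Set

lemma div_mem_slitPlane_of_mem_ball {w z : ℂ} (hz : z ∈ ball w ‖w‖) :
    z / w ∈ Complex.slitPlane := by
  have hw : w ≠ 0 := norm_pos_iff.mp (pos_of_mem_ball hz)
  have hlt : ‖(z - w) / w‖ < 1 := by
    rw [norm_div, div_lt_one (norm_pos_iff.mpr hw), ← dist_eq_norm]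
    exact hz
  convert Complex.mem_slitPlane_of_norm_lt_one hlt using 1
  field_simp
  ring

lemma two_le_norm_of_mem_ball {r : ℝ} {w z : ℂ} (hw : r + 2 ≤ ‖w‖)
    (hz : z ∈ ball w r) : 2 ≤ ‖z‖ := by
  have := norm_sub_norm_le w z
  rw [← dist_eq_norm, dist_comm] at this
  linarith [mem_ball.mp hz]

lemma norm_inv_le_half_of_mem_ball {r : ℝ} {w z : ℂ} (hw : r + 2 ≤ ‖w‖)
    (hz : z ∈ ball w r) : ‖z⁻¹‖ ≤ 1 / 2 := by
  rw [norm_inv, one_div]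
  exact inv_anti₀ two_pos (two_le_norm_of_mem_ball hw hz)

lemma ball_subset_ball_norm {r : ℝ} {w : ℂ} (hw : r + 2 ≤ ‖w‖) :
    ball w r ⊆ ball w ‖w‖ :=
  ball_subset_ball (by linarith)

noncomputable def logBranch (c w z : ℂ) : ℂ := c + Complex.log (z / w)

lemma logBranch_self (c : ℂ) {w : ℂ} (hw : w ≠ 0) : logBranch c w w = c := by
  simp [logBranch, div_self hw]

lemma exp_logBranch {c w z : ℂ} (hc : Complex.exp c = w) (hz : z ≠ 0) :
    Complex.exp (logBranch c w z) = z := by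
  have hw : w ≠ 0 := hc ▸ Complex.exp_ne_zero c
  rw [logBranch, Complex.exp_add, hc, Complex.exp_log (div_ne_zero hz hw)]
  field_simp

lemma hasDerivAt_logBranch (c : ℂ) {w z : ℂ} (hz : z ∈ ball w ‖w‖) :
    HasDerivAt (logBranch c w) z⁻¹ z := by
  have hw : w ≠ 0 := norm_pos_iff.mp (pos_of_mem_ball hz)
  have hz0 : z ≠ 0 := by
    rintro rfl
    simp [mem_ball] at hz
  have hdiv : HasDerivAt (fun y : ℂ => y / w) (1 / w) z := by
    simpa using (hasDerivAt_id z).div_const w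
  have hlog :=
    ((Complex.hasDerivAt_log (div_mem_slitPlane_of_mem_ball hz)).comp z hdiv).const_add c
  rwa [show (z / w)⁻¹ * (1 / w) = z⁻¹ by field_simp] at hlog

lemma mapsTo_logBranch (c : ℂ) {r : ℝ} {w : ℂ} (hw : r + 2 ≤ ‖w‖) :
    MapsTo (logBranch c w) (ball w r) (ball c r) := by
  intro z hz
  have hr : 0 < r := pos_of_mem_ball hz
  have hw0 : w ≠ 0 := norm_pos_iff.mp (by linarith [norm_nonneg w])
  have hmv : ‖logBranch c w z - logBranch c w w‖ ≤ 1 / 2 * ‖z - w‖ :=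
    (convex_ball w r).norm_image_sub_le_of_norm_hasDerivWithin_le
      (fun x hx => (hasDerivAt_logBranch c (ball_subset_ball_norm hw hx)).hasDerivWithinAt)
      (fun x hx => norm_inv_le_half_of_mem_ball hw hx) (mem_ball_self hr) hz
  rw [logBranch_self c hw0, ← dist_eq_norm, ← dist_eq_norm] at hmv
  rw [mem_ball] at hz ⊢
  linarith

noncomputable def orbitBranch (z₀ : ℂ) : ℕ → ℂ → ℂ
  | 0 => id
  | n + 1 => orbitBranch z₀ n ∘ logBranch (Complex.exp^[n] z₀) (Complex.exp^[n + 1] z₀)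

lemma orbitBranch_iterate_exp (z₀ : ℂ) (n : ℕ) :
    orbitBranch z₀ n (Complex.exp^[n] z₀) = z₀ := by
  induction n with
  | zero => rfl
  | succ n ih =>
    have hne : Complex.exp^[n + 1] z₀ ≠ 0 := by
      rw [Function.iterate_succ_apply']
      exact Complex.exp_ne_zero _
    simp only [orbitBranch, Function.comp_apply, logBranch_self _ hne, ih]

section AlongOrbit

variable {r : ℝ} {z₀ : ℂ} (h : ∀ k : ℕ, 1 ≤ k → r + 2 ≤ ‖Complex.exp^[k] z₀‖)
include h

lemma mapsTo_logBranch_orbit (n : ℕ) :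
    MapsTo (logBranch (Complex.exp^[n] z₀) (Complex.exp^[n + 1] z₀))
      (ball (Complex.exp^[n + 1] z₀) r) (ball (Complex.exp^[n] z₀) r) :=
  mapsTo_logBranch _ (h (n + 1) n.succ_pos)

lemma iterate_exp_orbitBranch {n : ℕ} {z : ℂ} (hz : z ∈ ball (Complex.exp^[n] z₀) r) :
    Complex.exp^[n] (orbitBranch z₀ n z) = z := by
  induction n generalizing z with
  | zero => rfl
  | succ n ih =>
    have hz0 : z ≠ 0 := by
      have := two_le_norm_of_mem_ball (h (n + 1) n.succ_pos) hz
      exact norm_pos_iff.mp (by linarith)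
    rw [orbitBranch, Function.comp_apply, Function.iterate_succ_apply',
      ih (mapsTo_logBranch_orbit h n hz),
      exp_logBranch (Function.iterate_succ_apply' Complex.exp n z₀).symm hz0]

lemma differentiableAt_orbitBranch {n : ℕ} {z : ℂ} (hz : z ∈ ball (Complex.exp^[n] z₀) r) :
    DifferentiableAt ℂ (orbitBranch z₀ n) z := by
  induction n generalizing z with
  | zero => exact differentiableAt_id
  | succ n ih =>
    have hw := h (n + 1) n.succ_pos
    exact (ih (mapsTo_logBranch_orbit h n hz)).comp z
      (hasDerivAt_logBranch _ (ball_subset_ball_norm hw hz)).differentiableAt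

lemma norm_deriv_orbitBranch_le {n : ℕ} {z : ℂ} (hz : z ∈ ball (Complex.exp^[n] z₀) r) :
    ‖deriv (orbitBranch z₀ n) z‖ ≤ (1 / 2) ^ n := by
  induction n generalizing z with
  | zero => simp [orbitBranch]
  | succ n ih =>
    have hw := h (n + 1) n.succ_pos
    have hL := hasDerivAt_logBranch (Complex.exp^[n] z₀) (ball_subset_ball_norm hw hz)
    have hLz := mapsTo_logBranch_orbit h n hz
    rw [orbitBranch, deriv_comp z (differentiableAt_orbitBranch h hLz) hL.differentiableAt,
      hL.deriv, norm_mul, pow_succ]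
    exact mul_le_mul (ih hLz) (norm_inv_le_half_of_mem_ball hw hz) (norm_nonneg _)
      (by positivity)

end AlongOrbit

theorem inverse_branches_along_orbit (z₀ : ℂ)
    (h : ∀ n : ℕ, 1 ≤ n → 2 * π + 2 ≤ ‖Complex.exp^[n] z₀‖) :
    ∀ n : ℕ, 1 ≤ n → ∃ φ : ℂ → ℂ,
      DifferentiableOn ℂ φ (ball (Complex.exp^[n] z₀) (2 * π)) ∧
      φ (Complex.exp^[n] z₀) = z₀ ∧
      ∀ z ∈ ball (Complex.exp^[n] z₀) (2 * π),
        Complex.exp^[n] (φ z) = z ∧ ‖deriv φ z‖ ≤ (1 / 2) ^ n := by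
  intro n _
  exact ⟨orbitBranch z₀ n,
    fun z hz => (differentiableAt_orbitBranch h hz).differentiableWithinAt,
    orbitBranch_iterate_exp z₀ n,
    fun z hz => ⟨iterate_exp_orbitBranch h hz, norm_deriv_orbitBranch_le h hz⟩⟩
end
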